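/- Consider m successes in n Bernoulli trials under a Beta(a,b) prior, and compare a single block (marginal B(a+m, b+n-m)/B(a,b)) with a split into three sub-blocks with (m₁, n₁), (m₂, n₂), (m₃, n₃) successes/trials, where all dyads are accounted for (m₁+m₂+m₃ = m, n₁+n₂+n₃ = n, the third sub-block being the cross-block dyads) and the split marginal is the product of the three Beta ratios. For the special case a = b = 1, if the data are homogeneous in the sense that m₁/n₁ = m₂/n₂ = m₃/n₃ = m/n, then the Bayes factor given by log[BF] = log[B(1+m₁,1+n₁-m₁)B(1+m₂,1+n₂-m₂)·B(1+m₃,1+n₃-m₃)] - log[B(1+m,1+n-m)·B(1,1)²] satisfies BF ≤ 1, i.e. the collapsed marginal never favors splitting a perfectly homogeneous block. -/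

import Mathlib

open Real

/-- The Beta function via Gamma functions. -/
noncomputable def betaFn (x y : ℝ) : ℝ :=
  Real.Gamma x * Real.Gamma y / Real.Gamma (x + y)

open MeasureTheory Set

namespace OccamAux

/-- The unit interval (as `Ioc`) used as our probability space. -/
noncomputable abbrev s01 : Set ℝ := Set.Ioc (0 : ℝ) 1

lemma vol_s01 : (MeasureTheory.volume s01) = 1 := by
  rw [Real.volume_Ioc]; norm_num

lemma integral_const_s01 (c : ℝ) : (∫ _ in s01, c) = c := by
  rw [MeasureTheory.setIntegral_const, MeasureTheory.measureReal_def, vol_s01]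
  simp

/-- Evaluation of the real beta integral with natural exponents. -/
lemma beta_int (a b : ℕ) :
    (∫ x in s01, x ^ a * (1 - x) ^ b) =
      (a.factorial * b.factorial : ℝ) / (a + b + 1).factorial := by
  have ha : (0 : ℝ) < (a : ℝ) + 1 := by positivity
  have hb : (0 : ℝ) < (b : ℝ) + 1 := by positivity
  have h := Complex.Gamma_mul_Gamma_eq_betaIntegral
    (s := (a : ℂ) + 1) (t := (b : ℂ) + 1) (by simpa using ha) (by simpa using hb)
  rw [show ((a : ℂ) + 1) + ((b : ℂ) + 1) = ((a + b + 1 : ℕ) : ℂ) + 1 by push_cast; ring] at h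
  rw [show ((a : ℂ) + 1) = ((a : ℕ) : ℂ) + 1 from rfl] at h
  rw [show ((b : ℂ) + 1) = ((b : ℕ) : ℂ) + 1 from rfl] at h
  rw [Complex.Gamma_nat_eq_factorial, Complex.Gamma_nat_eq_factorial,
    Complex.Gamma_nat_eq_factorial] at h
  have hbeta : Complex.betaIntegral ((a : ℂ) + 1) ((b : ℂ) + 1) =
      ((∫ x in s01, x ^ a * (1 - x) ^ b : ℝ) : ℂ) := by
    rw [Complex.betaIntegral]
    rw [show (∫ x in s01, x ^ a * (1 - x) ^ b) =
        ∫ x in (0:ℝ)..1, x ^ a * (1 - x) ^ b by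
      rw [intervalIntegral.integral_of_le (by norm_num : (0:ℝ) ≤ 1)]]
    rw [← intervalIntegral.integral_ofReal]
    apply intervalIntegral.integral_congr
    intro x _
    simp only [add_sub_cancel_right]
    push_cast
    rw [Complex.cpow_natCast, Complex.cpow_natCast]
  rw [hbeta] at h
  have hfact : ((a + b + 1).factorial : ℂ) ≠ 0 :=
    Nat.cast_ne_zero.mpr (Nat.factorial_ne_zero _)
  have h2 : ((∫ x in s01, x ^ a * (1 - x) ^ b : ℝ) : ℂ) =
      (((a.factorial * b.factorial : ℝ) / (a + b + 1).factorial : ℝ) : ℂ) := by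
    push_cast
    rw [eq_div_iff hfact]
    linear_combination -h
  exact_mod_cast h2

/-- Chebyshev's correlation inequality on the unit interval for comonotone
continuous functions. -/
lemma chebyshev {f h : ℝ → ℝ} (hf : Continuous f) (hh : Continuous h)
    (hm : ∀ x ∈ s01, ∀ y ∈ s01, 0 ≤ (f x - f y) * (h x - h y)) :
    (∫ x in s01, f x) * (∫ x in s01, h x) ≤ ∫ x in s01, f x * h x := by
  have hfi : IntegrableOn f s01 := hf.integrableOn_Ioc
  have hhi : IntegrableOn h s01 := hh.integrableOn_Ioc
  have hfhi : IntegrableOn (fun x => f x * h x) s01 := (hf.mul hh).integrableOn_Ioc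
  set A := ∫ x in s01, f x with hA
  set B := ∫ x in s01, h x with hB
  set C := ∫ x in s01, f x * h x with hC
  have key : ∀ y, (∫ x in s01, (f x - f y) * (h x - h y)) =
      C - f y * B - h y * A + f y * h y := by
    intro y
    have e1 : ∀ x, (f x - f y) * (h x - h y) =
        f x * h x - f y * h x - h y * f x + f y * h y := by intro x; ring
    simp only [e1]
    rw [MeasureTheory.integral_add, MeasureTheory.integral_sub, MeasureTheory.integral_sub,
      MeasureTheory.integral_const_mul, MeasureTheory.integral_const_mul, integral_const_s01]
    · exact hfhi
    · exact hhi.const_mul _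
    · exact hfhi.sub (hhi.const_mul _)
    · exact hfi.const_mul _
    · exact (hfhi.sub (hhi.const_mul _)).sub (hfi.const_mul _)
    · exact (integrableOn_const_iff).mpr (Or.inr (by rw [vol_s01]; exact ENNReal.one_lt_top))
  have outer : (∫ y in s01, (C - f y * B - h y * A + f y * h y)) = 2 * C - 2 * (A * B) := by
    rw [MeasureTheory.integral_add, MeasureTheory.integral_sub, MeasureTheory.integral_sub,
      MeasureTheory.integral_mul_const, MeasureTheory.integral_mul_const, integral_const_s01,
      ← hA, ← hB, ← hC]
    · ring
    · exact (integrableOn_const_iff).mpr (Or.inr (by rw [vol_s01]; exact ENNReal.one_lt_top))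
    · exact hfi.mul_const _
    · exact ((integrableOn_const_iff).mpr (Or.inr (by rw [vol_s01]; exact ENNReal.one_lt_top))).sub
        (hfi.mul_const _)
    · exact hhi.mul_const _
    · exact (((integrableOn_const_iff).mpr (Or.inr (by rw [vol_s01]; exact ENNReal.one_lt_top))).sub
        (hfi.mul_const _)).sub (hhi.mul_const _)
    · exact hfhi
  have hnn : 0 ≤ ∫ y in s01, (C - f y * B - h y * A + f y * h y) := by
    apply MeasureTheory.setIntegral_nonneg measurableSet_Ioc
    intro y hy
    rw [← key y]
    apply MeasureTheory.setIntegral_nonneg measurableSet_Ioc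
    intro x hx
    exact hm x hx y hy
  rw [outer] at hnn
  linarith

/-- rpow manipulation: `(t^C)^(i/N) = t^c` when `c * N = C * i`. -/
lemma rpow_aux (t : ℝ) (ht : 0 ≤ t) (C c N i : ℕ) (hN : 0 < N)
    (h : c * N = C * i) : (t ^ C) ^ ((i : ℝ) / N) = (t : ℝ) ^ c := by
  rw [← Real.rpow_natCast t C, ← Real.rpow_mul ht]
  rw [show (C : ℝ) * ((i : ℝ) / N) = ((C * i : ℕ) : ℝ) / N by push_cast; ring]
  rw [← h]
  rw [show ((c * N : ℕ) : ℝ) / N = (c : ℝ) by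
    push_cast; field_simp]
  exact Real.rpow_natCast t c

lemma comono (g : ℝ → ℝ) (hg : ∀ x ∈ s01, 0 ≤ g x) (c d : ℕ) :
    ∀ x ∈ s01, ∀ y ∈ s01, 0 ≤ (g x ^ c - g y ^ c) * (g x ^ d - g y ^ d) := by
  intro x hx y hy
  rcases le_total (g x) (g y) with hle | hle
  · have h1 : g x ^ c ≤ g y ^ c := pow_le_pow_left₀ (hg x hx) hle c
    have h2 : g x ^ d ≤ g y ^ d := pow_le_pow_left₀ (hg x hx) hle d
    nlinarith
  · have h1 : g y ^ c ≤ g x ^ c := pow_le_pow_left₀ (hg y hy) hle c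
    have h2 : g y ^ d ≤ g x ^ d := pow_le_pow_left₀ (hg y hy) hle d
    exact mul_nonneg (by linarith) (by linarith)

/-- `betaFn` at shifted natural arguments equals a ratio of factorials. -/
lemma betaFn_eval (sN : ℕ) (N : ℕ) (h : sN ≤ N) :
    betaFn (1 + sN) (1 + ((N : ℝ) - sN)) =
      (sN.factorial * (N - sN).factorial : ℝ) / (N + 1).factorial := by
  have h1 : (1 : ℝ) + sN = (sN : ℝ) + 1 := by ring
  have h2 : (1 : ℝ) + ((N : ℝ) - sN) = ((N - sN : ℕ) : ℝ) + 1 := by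
    push_cast [Nat.cast_sub h]; ring
  have h3 : ((sN : ℝ) + 1) + (((N - sN : ℕ) : ℝ) + 1) = ((N + 1 : ℕ) : ℝ) + 1 := by
    push_cast [Nat.cast_sub h]; ring
  rw [betaFn, h1, h2, h3, Real.Gamma_nat_eq_factorial, Real.Gamma_nat_eq_factorial,
    Real.Gamma_nat_eq_factorial]

end OccamAux

/-- Occam penalty of the collapsed Beta–Bernoulli evidence under the uniform
prior `a = b = 1`: splitting a perfectly homogeneous block of `n` dyads with
`m` edges into three sub-blocks (two diagonal, one cross) whose empirical edge
rates all equal `m/n` never increases the marginal likelihood, i.e. the split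
Bayes factor is at most 1. -/
theorem homogeneous_split_bayes_factor_le_one
    (n m n1 n2 n3 m1 m2 m3 : ℕ)
    (hn1 : 1 ≤ n1) (hn2 : 1 ≤ n2) (hn3 : 1 ≤ n3)
    (hnsum : n1 + n2 + n3 = n) (hmsum : m1 + m2 + m3 = m)
    (hmn : m ≤ n)
    (hrate1 : m1 * n = m * n1) (hrate2 : m2 * n = m * n2)
    (hrate3 : m3 * n = m * n3) :
    (betaFn (1 + m1) (1 + ((n1 : ℝ) - m1)) *
       betaFn (1 + m2) (1 + ((n2 : ℝ) - m2)) *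
       betaFn (1 + m3) (1 + ((n3 : ℝ) - m3))) /
      (betaFn (1 + m) (1 + ((n : ℝ) - m)) * betaFn 1 1 ^ 2) ≤ 1 := by
  classical
  have hn : 0 < n := by omega
  have hm1n1 : m1 ≤ n1 := Nat.le_of_mul_le_mul_right
    (by rw [hrate1, mul_comm n1 n]; exact Nat.mul_le_mul_right n1 hmn) hn
  have hm2n2 : m2 ≤ n2 := Nat.le_of_mul_le_mul_right
    (by rw [hrate2, mul_comm n2 n]; exact Nat.mul_le_mul_right n2 hmn) hn
  have hm3n3 : m3 ≤ n3 := Nat.le_of_mul_le_mul_right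
    (by rw [hrate3, mul_comm n3 n]; exact Nat.mul_le_mul_right n3 hmn) hn
  set k := n - m with hk
  set k1 := n1 - m1 with hk1
  set k2 := n2 - m2 with hk2
  set k3 := n3 - m3 with hk3
  have hkr1 : k1 * n = k * n1 := by
    rw [hk1, hk]
    have hr : (m1 : ℤ) * n = m * n1 := by exact_mod_cast hrate1
    zify [hm1n1, hmn]
    linear_combination -hr
  have hkr2 : k2 * n = k * n2 := by
    rw [hk2, hk]
    have hr : (m2 : ℤ) * n = m * n2 := by exact_mod_cast hrate2
    zify [hm2n2, hmn]
    linear_combination -hr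
  have hkr3 : k3 * n = k * n3 := by
    rw [hk3, hk]
    have hr : (m3 : ℤ) * n = m * n3 := by exact_mod_cast hrate3
    zify [hm3n3, hmn]
    linear_combination -hr
  have hksum : k1 + k2 + k3 = k := by omega
  -- the common "rate" function
  set g : ℝ → ℝ := fun x => (x ^ m * (1 - x) ^ k) ^ ((1 : ℝ) / n) with hg
  have hx01 : ∀ x ∈ OccamAux.s01, 0 ≤ x ∧ 0 ≤ 1 - x := by
    intro x hx
    exact ⟨le_of_lt hx.1, by linarith [hx.2]⟩
  have hg0 : ∀ x ∈ OccamAux.s01, 0 ≤ g x := by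
    intro x hx
    exact Real.rpow_nonneg (mul_nonneg (pow_nonneg (hx01 x hx).1 m)
      (pow_nonneg (hx01 x hx).2 k)) _
  have hpt : ∀ (mi ki ni : ℕ), mi * n = m * ni → ki * n = k * ni →
      ∀ x ∈ OccamAux.s01, x ^ mi * (1 - x) ^ ki = g x ^ ni := by
    intro mi ki ni hmi hki x hx
    obtain ⟨hx0, hx1⟩ := hx01 x hx
    have hu : (0 : ℝ) ≤ x ^ m * (1 - x) ^ k :=
      mul_nonneg (pow_nonneg hx0 m) (pow_nonneg hx1 k)
    rw [hg]
    rw [← Real.rpow_natCast ((x ^ m * (1 - x) ^ k) ^ ((1 : ℝ) / n)) ni,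
      ← Real.rpow_mul hu]
    rw [show (1 : ℝ) / n * ni = (ni : ℝ) / n by ring]
    rw [Real.mul_rpow (pow_nonneg hx0 m) (pow_nonneg hx1 k)]
    rw [OccamAux.rpow_aux x hx0 m mi n ni hn hmi,
      OccamAux.rpow_aux (1 - x) hx1 k ki n ni hn hki]
  -- the three sub-block likelihood functions
  set f1 : ℝ → ℝ := fun x => x ^ m1 * (1 - x) ^ k1 with hf1
  set f2 : ℝ → ℝ := fun x => x ^ m2 * (1 - x) ^ k2 with hf2
  set f3 : ℝ → ℝ := fun x => x ^ m3 * (1 - x) ^ k3 with hf3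
  have hc1 : Continuous f1 := (continuous_pow m1).mul ((continuous_const.sub continuous_id).pow k1)
  have hc2 : Continuous f2 := (continuous_pow m2).mul ((continuous_const.sub continuous_id).pow k2)
  have hc3 : Continuous f3 := (continuous_pow m3).mul ((continuous_const.sub continuous_id).pow k3)
  have hptf1 : ∀ x ∈ OccamAux.s01, f1 x = g x ^ n1 := hpt m1 k1 n1 hrate1 hkr1
  have hptf2 : ∀ x ∈ OccamAux.s01, f2 x = g x ^ n2 := hpt m2 k2 n2 hrate2 hkr2
  have hptf3 : ∀ x ∈ OccamAux.s01, f3 x = g x ^ n3 := hpt m3 k3 n3 hrate3 hkr3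
  have step1 : (∫ x in OccamAux.s01, f1 x) * (∫ x in OccamAux.s01, f2 x) ≤
      ∫ x in OccamAux.s01, f1 x * f2 x := by
    apply OccamAux.chebyshev hc1 hc2
    intro x hx y hy
    rw [hptf1 x hx, hptf1 y hy, hptf2 x hx, hptf2 y hy]
    exact OccamAux.comono g hg0 n1 n2 x hx y hy
  have step2 : (∫ x in OccamAux.s01, f1 x * f2 x) * (∫ x in OccamAux.s01, f3 x) ≤
      ∫ x in OccamAux.s01, (f1 x * f2 x) * f3 x := by
    apply OccamAux.chebyshev (hc1.mul hc2) hc3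
    intro x hx y hy
    rw [Pi.mul_apply, Pi.mul_apply, hptf1 x hx, hptf1 y hy, hptf2 x hx, hptf2 y hy, hptf3 x hx, hptf3 y hy,
      ← pow_add, ← pow_add]
    exact OccamAux.comono g hg0 (n1 + n2) n3 x hx y hy
  have hI3nn : 0 ≤ ∫ x in OccamAux.s01, f3 x := by
    apply MeasureTheory.setIntegral_nonneg measurableSet_Ioc
    intro x hx
    exact mul_nonneg (pow_nonneg (hx01 x hx).1 m3) (pow_nonneg (hx01 x hx).2 k3)
  have hprod : (∫ x in OccamAux.s01, (f1 x * f2 x) * f3 x) =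
      ∫ x in OccamAux.s01, x ^ m * (1 - x) ^ k := by
    apply MeasureTheory.setIntegral_congr_fun measurableSet_Ioc
    intro x _
    simp only [hf1, hf2, hf3]
    rw [← hmsum, ← hksum, pow_add, pow_add, pow_add, pow_add]
    ring
  have chain : (∫ x in OccamAux.s01, f1 x) * (∫ x in OccamAux.s01, f2 x) *
      (∫ x in OccamAux.s01, f3 x) ≤ ∫ x in OccamAux.s01, x ^ m * (1 - x) ^ k := by
    calc (∫ x in OccamAux.s01, f1 x) * (∫ x in OccamAux.s01, f2 x) *
        (∫ x in OccamAux.s01, f3 x)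
        ≤ (∫ x in OccamAux.s01, f1 x * f2 x) * (∫ x in OccamAux.s01, f3 x) :=
          mul_le_mul_of_nonneg_right step1 hI3nn
      _ ≤ ∫ x in OccamAux.s01, (f1 x * f2 x) * f3 x := step2
      _ = _ := hprod
  -- rewrite the beta functions as integrals
  have e1 : betaFn (1 + m1) (1 + ((n1 : ℝ) - m1)) = ∫ x in OccamAux.s01, f1 x := by
    rw [OccamAux.betaFn_eval m1 n1 hm1n1, hf1, OccamAux.beta_int m1 k1,
      show m1 + k1 + 1 = n1 + 1 by omega]
  have e2 : betaFn (1 + m2) (1 + ((n2 : ℝ) - m2)) = ∫ x in OccamAux.s01, f2 x := by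
    rw [OccamAux.betaFn_eval m2 n2 hm2n2, hf2, OccamAux.beta_int m2 k2,
      show m2 + k2 + 1 = n2 + 1 by omega]
  have e3 : betaFn (1 + m3) (1 + ((n3 : ℝ) - m3)) = ∫ x in OccamAux.s01, f3 x := by
    rw [OccamAux.betaFn_eval m3 n3 hm3n3, hf3, OccamAux.beta_int m3 k3,
      show m3 + k3 + 1 = n3 + 1 by omega]
  have eF : betaFn (1 + m) (1 + ((n : ℝ) - m)) = ∫ x in OccamAux.s01, x ^ m * (1 - x) ^ k := by
    rw [OccamAux.betaFn_eval m n hmn, OccamAux.beta_int m k,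
      show m + k + 1 = n + 1 by omega]
  have e11 : betaFn 1 1 = 1 := by
    rw [betaFn, Real.Gamma_one, show (1 : ℝ) + 1 = 2 by norm_num, Real.Gamma_two]
    norm_num
  have hFpos : 0 < betaFn (1 + m) (1 + ((n : ℝ) - m)) := by
    rw [OccamAux.betaFn_eval m n hmn]
    positivity
  rw [e11, one_pow, mul_one, div_le_one hFpos, e1, e2, e3, eF]
  exact chain
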